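/- arXiv:1207.6509 — 2 statements merged into one kernel-verified Lean document; each statement's English description precedes it below -/
import Mathlib

section
/- The optimal dual solution for the D-norm protection LP is achieved by setting q equal to the (Γ+1)-st largest cost c_{(Γ+1)} (or 0 if Γ = |Ω|) and p_i = max(c_i − q, 0); with this choice q·Γ + Σ_i p_i equals the sum of the Γ largest costs. -/
/-!
Sort the costs decreasingly and let `q` be the entry at position `Γ` (or `0` past the end).
Every entry among the first `Γ` is at least `q` and every later entry is at most `q`, so
`∑ max (c i - q) 0` only collects `c i - q` from the `Γ` largest costs, and adding `q * Γ`
leaves exactly their sum.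
-/

namespace List

theorem sum_map_sub_const {α : Type*} [AddCommGroup α] (l : List α) (q : α) :
    (l.map (· - q)).sum = l.sum - l.length • q := by
  induction l with
  | nil => simp
  | cons a t ih => simp only [map_cons, sum_cons, ih, length_cons, succ_nsmul]; abel

theorem sum_map_max_sub_eq_of_split {α : Type*} [AddCommGroup α] [LinearOrder α]
    [IsOrderedAddMonoid α] (l : List α) (k : ℕ) (q : α)
    (htake : ∀ x ∈ l.take k, q ≤ x) (hdrop : ∀ y ∈ l.drop k, y ≤ q) :
    (l.map (fun x => max (x - q) 0)).sum = (l.take k).sum - (l.take k).length • q := by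
  have hhead : (l.take k).map (fun x => max (x - q) 0) = (l.take k).map (· - q) :=
    map_congr_left fun x hx => max_eq_left (sub_nonneg.2 (htake x hx))
  have htail : ((l.drop k).map (fun x => max (x - q) 0)).sum = 0 :=
    sum_eq_zero fun z hz => by
      obtain ⟨y, hy, rfl⟩ := mem_map.1 hz
      exact max_eq_right (sub_nonpos.2 (hdrop y hy))
  rw [← take_append_drop k l, map_append, sum_append, hhead, htail, add_zero,
    sum_map_sub_const, take_append_drop]

theorem getD_zero_split_of_pairwise_ge {α : Type*} [Preorder α] [Zero α] {l : List α}
    (hl : l.Pairwise (· ≥ ·)) (hnonneg : ∀ x ∈ l, 0 ≤ x) (k : ℕ) :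
    (∀ x ∈ l.take k, l.getD k 0 ≤ x) ∧ ∀ y ∈ l.drop k, y ≤ l.getD k 0 := by
  rcases lt_or_ge k l.length with hk | hk
  · have hdrop : l.drop k = l[k] :: l.drop (k + 1) := drop_eq_getElem_cons hk
    have hmem : l[k] ∈ l.drop k := hdrop ▸ mem_cons_self
    have htail : ∀ y ∈ l.drop (k + 1), y ≤ l[k] :=
      (pairwise_cons.1 (hdrop ▸ hl.drop)).1
    rw [getD_eq_getElem _ _ hk]
    refine ⟨fun x hx => hl.rel_of_mem_take_of_mem_drop hx hmem, fun y hy => ?_⟩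
    rw [hdrop, mem_cons] at hy
    rcases hy with rfl | hy
    exacts [le_rfl, htail y hy]
  · rw [getD_eq_default _ _ hk, take_of_length_le hk, drop_of_length_le hk]
    exact ⟨hnonneg, by simp⟩

theorem getD_zero_nonneg {α : Type*} [Preorder α] [Zero α] {l : List α}
    (hnonneg : ∀ x ∈ l, 0 ≤ x) (k : ℕ) :
    0 ≤ l.getD k 0 := by
  rcases lt_or_ge k l.length with hk | hk
  · rw [getD_eq_getElem _ _ hk]
    exact hnonneg _ (getElem_mem hk)
  · rw [getD_eq_default _ _ hk]

end List

theorem dnorm_dual_optimal_solution_general {Ω : Type*} [Fintype Ω]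
    (c : Ω → ℝ) (hc : ∀ i, 0 ≤ c i) (Γ : ℕ) (hΓ : Γ ≤ Fintype.card Ω) :
    let l := List.insertionSort (· ≥ ·) ((Finset.univ.val.map c).toList)
    let q := l.getD Γ 0
    let p := fun i => max (c i - q) 0
    0 ≤ q ∧ (∀ i, 0 ≤ p i) ∧ (∀ i, c i ≤ q + p i) ∧
      q * (Γ : ℝ) + ∑ i, p i = (l.take Γ).sum := by
  intro l q p
  have hperm : l.Perm (Finset.univ.val.map c).toList := List.perm_insertionSort _ _
  have hsorted : l.Pairwise (· ≥ ·) := List.pairwise_insertionSort _ _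
  have hnonneg : ∀ x ∈ l, 0 ≤ x := by
    simpa [hperm.mem_iff] using fun i => hc i
  have hlength : (l.take Γ).length = Γ := by
    simpa [hperm.length_eq] using hΓ
  have hsum : ∑ i, p i = (l.map fun x => max (x - q) 0).sum := by
    rw [(hperm.map _).sum_eq, Multiset.sum_map_toList, Multiset.map_map]
    rfl
  obtain ⟨htake, hdrop⟩ := List.getD_zero_split_of_pairwise_ge hsorted hnonneg Γ
  refine ⟨List.getD_zero_nonneg hnonneg Γ, fun i => le_max_right _ _,
    fun i => by linarith [le_max_left (c i - q) 0], ?_⟩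
  rw [hsum, List.sum_map_max_sub_eq_of_split l Γ q htake hdrop, hlength, nsmul_eq_mul]
  ring

/-- The optimal dual solution of the D-norm protection LP: take `q` to be the `(Γ+1)`-st
largest cost (or `0` if `Γ = |Ω|`, via the convention `c_(n+1) = 0`) and
`p i = max (c i - q) 0`. This pair is dual feasible and its objective
`q * Γ + ∑ i, p i` equals the sum of the `Γ` largest costs. -/
theorem dnorm_dual_optimal_solution {Ω : Type*} [Fintype Ω] [DecidableEq Ω]
    (c : Ω → ℝ) (hc : ∀ i, 0 ≤ c i) (Γ : ℕ) (hΓ : Γ ≤ Fintype.card Ω) :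
    let l := List.insertionSort (· ≥ ·) ((Finset.univ.val.map c).toList)
    let q := l.getD Γ 0
    let p := fun i => max (c i - q) 0
    0 ≤ q ∧ (∀ i, 0 ≤ p i) ∧ (∀ i, c i ≤ q + p i) ∧
      q * (Γ : ℝ) + ∑ i, p i = (l.take Γ).sum :=
  dnorm_dual_optimal_solution_general c hc Γ hΓ
end

section
/- The RMRP problem is NP-hard: the Bin-Packing problem reduces in polynomial time to the special case of RMRP with robustness index ρ = 0 (MRP), by identifying each bin with a relay's unit capacity and each item's size with the fraction r_i·τ_{ik} of relay capacity consumed by a logical link's primary path. -/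
/-- NP-hardness reduction for RMRP: correctness of the polynomial-time reduction from
Bin-Packing to MRP (RMRP with robustness index ρ = 0). Identifying each bin with a
relay of unit capacity and each item size `a i` with the load `r_i·τ_{ik}` of a logical
link's primary path, the items fit into at most `m` unit-capacity bins if and only if
the corresponding MRP instance admits an assignment (each link to exactly one opened
relay, each opened relay's load at most its capacity) using at most `m` relays. -/
theorem binpacking_reduces_to_mrp (n : ℕ) (a : Fin n → ℝ)
    (ha : ∀ i, 0 < a i ∧ a i ≤ 1) (m : ℕ) :
    (∃ f : Fin n → Fin n,
        (∀ k, ∑ i ∈ Finset.univ.filter (fun i => f i = k), a i ≤ 1) ∧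
        (Finset.univ.image f).card ≤ m) ↔
    (∃ (x : Fin n → Fin n → Bool) (z : Fin n → Bool),
        (∀ i, ∃! k, x i k = true) ∧
        (∀ k, ∑ i ∈ Finset.univ.filter (fun i => x i k = true), a i ≤
          (if z k then (1 : ℝ) else 0)) ∧
        (Finset.univ.filter (fun k => z k = true)).card ≤ m) := by
  constructor
  · rintro ⟨f, hload, hcard⟩
    refine ⟨fun i k => decide (f i = k), fun k => decide (k ∈ Finset.univ.image f),
      ?_, ?_, ?_⟩
    · intro i
      exact ⟨f i, by simp, fun k hk => by simp at hk; omega⟩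
    · intro k
      have hfilter : Finset.univ.filter (fun i => decide (f i = k) = true)
          = Finset.univ.filter (fun i => f i = k) := by
        apply Finset.filter_congr; intro i _; simp
      rw [hfilter]
      by_cases hk : k ∈ Finset.univ.image f
      · have h2 : (fun k => decide (k ∈ Finset.univ.image f)) k = true := by simp [hk]
        rw [h2, if_pos rfl]
        exact hload k
      · have h2 : (fun k => decide (k ∈ Finset.univ.image f)) k = false := by simp [hk]
        rw [h2, if_neg Bool.false_ne_true]
        have : Finset.univ.filter (fun i => f i = k) = ∅ := by
          apply Finset.filter_eq_empty_iff.mpr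
          intro i _ hfi
          exact hk (Finset.mem_image.mpr ⟨i, Finset.mem_univ i, hfi⟩)
        rw [this, Finset.sum_empty]
    · have : Finset.univ.filter (fun k => decide (k ∈ Finset.univ.image f) = true)
          = Finset.univ.image f := by
        ext k; simp
      rw [this]; exact hcard
  · rintro ⟨x, z, hx, hload, hcard⟩
    choose g hg hg' using hx
    refine ⟨g, ?_, ?_⟩
    · intro k
      have hsub : Finset.univ.filter (fun i => g i = k)
          ⊆ Finset.univ.filter (fun i => x i k = true) := by
        intro i hi
        simp only [Finset.mem_filter, Finset.mem_univ, true_and] at hi ⊢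
        exact hi ▸ hg i
      calc ∑ i ∈ Finset.univ.filter (fun i => g i = k), a i
          ≤ ∑ i ∈ Finset.univ.filter (fun i => x i k = true), a i :=
            Finset.sum_le_sum_of_subset_of_nonneg hsub
              (fun i _ _ => (ha i).1.le)
        _ ≤ (if z k then (1 : ℝ) else 0) := hload k
        _ ≤ 1 := by split <;> norm_num
    · refine le_trans (Finset.card_le_card ?_) hcard
      intro k hk
      obtain ⟨i, _, rfl⟩ := Finset.mem_image.mp hk
      simp only [Finset.mem_filter, Finset.mem_univ, true_and]
      by_contra hz
      have hzf : z (g i) = false := by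
        cases h : z (g i) <;> simp [h] at hz ⊢
      have h1 : a i ≤ ∑ j ∈ Finset.univ.filter (fun j => x j (g i) = true), a j := by
        apply Finset.single_le_sum (fun j _ => (ha j).1.le)
        simp [hg i]
      have := hload (g i)
      rw [hzf] at this
      simp at this
      linarith [(ha i).1]
end
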